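/- Let v ≥ 7 with v ≡ 3 (mod 6), let D be a binary q-Steiner triple system S_2[2,3,v], and let A in GL(v, F_2) be an automorphism of D with A² = 1 and A ≠ 1. Then there exists s with 1 ≤ s ≤ ⌊v/2⌋ such that s ≢ 2 (mod 3) and A is conjugate in GL(v, F_2) to the matrix A_{v,s}. -/

import Mathlib

/-- The space `F_2^v` of binary row vectors of length `v`. -/
abbrev BinVec (v : ℕ) := Fin v → ZMod 2

/-- The image `U·A` of a subspace `U` of `F_2^v` under the linear map `x ↦ x·A`
given by the matrix `A`. -/
def subApply (v : ℕ) (A : Matrix (Fin v) (Fin v) (ZMod 2))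
    (U : Submodule (ZMod 2) (BinVec v)) : Submodule (ZMod 2) (BinVec v) :=
  U.map (Matrix.vecMulLinear A)

/-- A binary `q`-Steiner triple system `S_2[2,3,v]`: a set of `3`-dimensional
subspaces (blocks) of `F_2^v` such that every `2`-dimensional subspace is
contained in exactly one block. -/
def IsSteinerTriple (v : ℕ) (D : Set (Submodule (ZMod 2) (BinVec v))) : Prop :=
  (∀ B ∈ D, Module.finrank (ZMod 2) B = 3) ∧
  ∀ T : Submodule (ZMod 2) (BinVec v), Module.finrank (ZMod 2) T = 2 →
    ∃! B, B ∈ D ∧ T ≤ B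

/-- The matrix `A` is an automorphism of `D`: `U ↦ U·A` maps `D` onto itself. -/
def IsAutM (v : ℕ) (A : Matrix (Fin v) (Fin v) (ZMod 2))
    (D : Set (Submodule (ZMod 2) (BinVec v))) : Prop :=
  subApply v A '' D = D

lemma subApply_one (v : ℕ) (U : Submodule (ZMod 2) (BinVec v)) :
    subApply v 1 U = U := by
  have h : Matrix.vecMulLinear (1 : Matrix (Fin v) (Fin v) (ZMod 2)) = LinearMap.id := by
    refine LinearMap.ext fun x => ?_
    simp [Matrix.vecMulLinear_apply]
  simp [subApply, h]

lemma subApply_mul (v : ℕ) (A B : Matrix (Fin v) (Fin v) (ZMod 2))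
    (U : Submodule (ZMod 2) (BinVec v)) :
    subApply v (A * B) U = subApply v B (subApply v A U) := by
  have h : Matrix.vecMulLinear (A * B) =
      (Matrix.vecMulLinear B).comp (Matrix.vecMulLinear A) := LinearMap.ext fun x => by
    simp only [Matrix.vecMulLinear_apply, LinearMap.coe_comp, Function.comp_apply]
    exact (Matrix.vecMul_vecMul x A B).symm
  rw [subApply, h, Submodule.map_comp]
  rfl

lemma subApply_comp (v : ℕ) (A B : Matrix (Fin v) (Fin v) (ZMod 2)) :
    (subApply v B) ∘ (subApply v A) = subApply v (A * B) :=
  funext fun U => (subApply_mul v A B U).symm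

/-- The automorphism group of `D`, as a subgroup of `GL(v, F_2)`. -/
def Aut (v : ℕ) (D : Set (Submodule (ZMod 2) (BinVec v))) :
    Subgroup (GL (Fin v) (ZMod 2)) where
  carrier := {A | IsAutM v A.val D}
  one_mem' := by
    show subApply v (1 : GL (Fin v) (ZMod 2)).val '' D = D
    rw [show (1 : GL (Fin v) (ZMod 2)).val = 1 from rfl]
    rw [show subApply v (1 : Matrix (Fin v) (Fin v) (ZMod 2)) = id from
      funext (subApply_one v), Set.image_id]
  mul_mem' := by
    intro A B hA hB
    show subApply v (A * B : GL (Fin v) (ZMod 2)).val '' D = D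
    rw [show (A * B : GL (Fin v) (ZMod 2)).val = A.val * B.val from rfl]
    rw [← subApply_comp, Set.image_comp]
    rw [show subApply v A.val '' D = D from hA]
    exact hB
  inv_mem' := by
    intro A hA
    show subApply v (A⁻¹ : GL (Fin v) (ZMod 2)).val '' D = D
    conv_lhs => rw [← show subApply v A.val '' D = D from hA]
    rw [← Set.image_comp, subApply_comp]
    rw [show A.val * (A⁻¹ : GL (Fin v) (ZMod 2)).val = 1 from A.mul_inv]
    rw [show subApply v (1 : Matrix (Fin v) (Fin v) (ZMod 2)) = id from
      funext (subApply_one v), Set.image_id]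

/-- `pairSwap s i` swaps `2m ↔ 2m+1` for `i < 2s` and fixes `i` otherwise. -/
def pairSwap (s i : ℕ) : ℕ :=
  if i < 2 * s then (if i % 2 = 0 then i + 1 else i - 1) else i

/-- The block diagonal matrix `A_{v,s}`: `s` consecutive blocks `[[0,1],[1,0]]`
on the diagonal, followed by a `(v-2s)×(v-2s)` identity matrix. -/
def Avs (v s : ℕ) : Matrix (Fin v) (Fin v) (ZMod 2) :=
  Matrix.of fun i j => if (j : ℕ) = pairSwap s (i : ℕ) then 1 else 0

/-- `M` and `N` are conjugate in `GL(v, F_2)`. -/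
def ConjGL (v : ℕ) (M N : Matrix (Fin v) (Fin v) (ZMod 2)) : Prop :=
  ∃ P : GL (Fin v) (ZMod 2), M = P.val * N * (P⁻¹).val

/-- The orbit of a subspace `P` under the subgroup generated by `A`. -/
def orbitOf (v : ℕ) (A : GL (Fin v) (ZMod 2)) (P : Submodule (ZMod 2) (BinVec v)) :
    Set (Submodule (ZMod 2) (BinVec v)) :=
  {Q | ∃ g ∈ Subgroup.zpowers A, Q = subApply v (g : GL (Fin v) (ZMod 2)).val P}

/-- The block diagonal matrix consisting of the 3×3 upper-triangular Jordan block
(1s on diagonal and superdiagonal) followed by the 4×4 upper-triangular Jordan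
block (1s on diagonal and superdiagonal). -/
def JordanJ3J4 : Matrix (Fin 7) (Fin 7) (ZMod 2) :=
  Matrix.of fun i j =>
    if j = i then 1 else if (j : ℕ) = (i : ℕ) + 1 ∧ (i : ℕ) ≠ 2 then 1 else 0

/-- The block diagonal matrix consisting of `k` consecutive 2×2 blocks
`[[0,1],[1,1]]` on the diagonal, followed by a `(v-2k)×(v-2k)` identity matrix. -/
def Bvk (v k : ℕ) : Matrix (Fin v) (Fin v) (ZMod 2) :=
  Matrix.of fun i j =>
    if (i : ℕ) < 2 * k then
      (if (i : ℕ) % 2 = 0 then (if (j : ℕ) = (i : ℕ) + 1 then 1 else 0)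
       else (if (j : ℕ) = (i : ℕ) - 1 ∨ (j : ℕ) = (i : ℕ) then 1 else 0))
    else if i = j then 1 else 0

/-!
Let `F` be the space of row vectors fixed by `A`, `f = dim F` and `s = rank (A - 1) = v - f`.
Since `(A - 1)² = 0` in characteristic 2, the image of `A - 1` lies in `F`, so `2s ≤ v`; lifting a
basis `w` of that image to vectors `x` with `x (A - 1) = w` and adding a basis `z` of a complement
of the image inside `F`, the basis `x₁, x₁A, …, xₛ, xₛA, z₁, …` exhibits `A` as `A_{v,s}`.

The block through a line of `F`, or through `x, xA` for `x ∉ F`, is `A`-invariant, and an invariant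
block not inside `F` meets `F` in a plane. Counting ordered pairs of distinct nonzero vectors of `F`
by their block gives `(2^f - 1)(2^f - 2) = 42 N₃ + 6 N₂`, where `N_d` is the number of blocks
meeting `F` in dimension `d`; counting the `x ∉ F` by the block through `x, xA` gives
`2^v = 2^f + 4 N₂`. If `s ≡ 2 (mod 3)` then `f ≡ 1` and `v ≡ 0`, and modulo 7 the first identity
forces `N₂ ≡ 0`, while the second then reads `1 ≡ 2`.
-/

section LinearAlgebra

variable {K V : Type*} [Field K] [AddCommGroup V] [Module K V]

open Module

theorem Submodule.exists_fin_span_eq {n : ℕ} (W : Submodule K V) [FiniteDimensional K W]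
    (hW : finrank K W = n) : ∃ w : Fin n → V, Submodule.span K (Set.range w) = W := by
  let b := Module.finBasisOfFinrankEq K W hW
  refine ⟨W.subtype ∘ b, ?_⟩
  rw [Set.range_comp, ← Submodule.map_span, b.span_eq, Submodule.map_subtype_top]

theorem LinearMap.finrank_le_two_mul_finrank_inf_ker {φ : V →ₗ[K] V} (hφ : φ ∘ₗ φ = 0)
    {B : Submodule K V} [FiniteDimensional K B] (hB : B.map φ ≤ B) :
    finrank K B ≤ 2 * finrank K ↥(B ⊓ LinearMap.ker φ) := by
  have hrange : B.map φ ≤ B ⊓ LinearMap.ker φ :=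
    le_inf hB (LinearMap.map_le_range.trans (LinearMap.range_le_ker_iff.mpr hφ))
  have hker :
      finrank K ↥(LinearMap.ker (φ.domRestrict B)) = finrank K ↥(B ⊓ LinearMap.ker φ) := by
    rw [LinearMap.ker_domRestrict, ← Submodule.finrank_map_subtype_eq, Submodule.map_comap_subtype]
  have := LinearMap.finrank_range_add_finrank_ker (φ.domRestrict B)
  rw [LinearMap.range_domRestrict, hker] at this
  have := Submodule.finrank_mono hrange
  omega

theorem LinearMap.finrank_le_two_mul_finrank_ker [FiniteDimensional K V] {φ : V →ₗ[K] V}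
    (hφ : φ ∘ₗ φ = 0) : finrank K V ≤ 2 * finrank K (LinearMap.ker φ) := by
  have := finrank_le_two_mul_finrank_inf_ker hφ (B := ⊤) le_top
  rwa [finrank_top, top_inf_eq] at this

end LinearAlgebra

section Counting

open Module Finset

variable {V : Type*} [AddCommGroup V] [Module (ZMod 2) V]

theorem finrank_span_pair {x y : V} (hx : x ≠ 0) (hy : y ≠ 0) (hxy : x ≠ y) :
    finrank (ZMod 2) (Submodule.span (ZMod 2) {x, y}) = 2 := by
  have hli : LinearIndependent (ZMod 2) ![x, y] := by
    refine LinearIndependent.pair_iff.mpr fun a b hab => ?_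
    rcases (by decide : ∀ c : ZMod 2, c = 0 ∨ c = 1) a with rfl | rfl <;>
    rcases (by decide : ∀ c : ZMod 2, c = 0 ∨ c = 1) b with rfl | rfl <;>
    simp_all [add_eq_zero_iff_eq_neg, ZModModule.neg_eq_self]
  have := finrank_span_eq_card hli
  rwa [Matrix.range_cons_cons_empty, Fintype.card_fin] at this

variable [Fintype V]

open scoped Classical in
theorem card_filter_mem_submodule (U : Submodule (ZMod 2) V) :
    #{x | x ∈ U} = 2 ^ finrank (ZMod 2) U := by
  rw [← Fintype.card_subtype, Module.card_eq_pow_finrank (K := ZMod 2), ZMod.card]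

open scoped Classical in
theorem card_filter_mem_and_not_mem (B F : Submodule (ZMod 2) V) :
    #{x | x ∈ B ∧ x ∉ F} = 2 ^ finrank (ZMod 2) B - 2 ^ finrank (ZMod 2) ↥(B ⊓ F) := by
  rw [← card_filter_mem_submodule, ← card_filter_mem_submodule,
    ← card_filter_add_card_filter_not (s := {x | x ∈ B}) (fun x => x ∈ F)]
  simp [filter_filter, Submodule.mem_inf]

open scoped Classical in
noncomputable def nonzeroPairs (U : Submodule (ZMod 2) V) : Finset (V × V) :=
  ({x | x ∈ U} : Finset V).erase 0 |>.offDiag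

theorem mem_nonzeroPairs {U : Submodule (ZMod 2) V} {p : V × V} :
    p ∈ nonzeroPairs U ↔ p.1 ∈ U ∧ p.2 ∈ U ∧ p.1 ≠ 0 ∧ p.2 ≠ 0 ∧ p.1 ≠ p.2 := by
  simp only [nonzeroPairs, mem_offDiag, mem_erase, ne_eq, mem_filter, mem_univ, true_and]
  tauto

theorem card_nonzeroPairs (U : Submodule (ZMod 2) V) :
    #(nonzeroPairs U) = (2 ^ finrank (ZMod 2) U - 1) * (2 ^ finrank (ZMod 2) U - 2) := by
  classical
  rw [nonzeroPairs, offDiag_card, card_erase_of_mem (by simp), card_filter_mem_submodule,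
    ← Nat.mul_sub_one, Nat.sub_sub]

end Counting

section Involution

open Module Matrix

variable {v : ℕ} {M : Matrix (Fin v) (Fin v) (ZMod 2)} {T B : Submodule (ZMod 2) (BinVec v)}

def fixedSpace (M : Matrix (Fin v) (Fin v) (ZMod 2)) : Submodule (ZMod 2) (BinVec v) :=
  LinearMap.ker (M - 1).vecMulLinear

theorem mem_fixedSpace {x : BinVec v} : x ∈ fixedSpace M ↔ x ᵥ* M = x := by
  simp [fixedSpace, sub_eq_zero]

theorem vecMulLinear_sub_one_apply (x : BinVec v) :
    (M - 1).vecMulLinear x = x ᵥ* M - x := by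
  simp

theorem vecMulLinear_sub_one_comp_self (hM2 : M * M = 1) :
    (M - 1).vecMulLinear ∘ₗ (M - 1).vecMulLinear = 0 := by
  have hsq : (M - 1) * (M - 1) = 0 :=
    calc (M - 1) * (M - 1) = M * M + (M + M) + 1 := by rw [ZModModule.sub_eq_add]; noncomm_ring
    _ = 0 := by rw [hM2, ZModModule.add_self, add_zero, ZModModule.add_self]
  refine LinearMap.ext fun x => ?_
  simp only [LinearMap.comp_apply, Matrix.vecMulLinear_apply, Matrix.vecMul_vecMul, hsq,
    Matrix.vecMul_zero, LinearMap.zero_apply]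

theorem finrank_range_add_finrank_fixedSpace :
    finrank (ZMod 2) (LinearMap.range (M - 1).vecMulLinear) + finrank (ZMod 2) (fixedSpace M) =
      v := by
  unfold fixedSpace
  simpa using (M - 1).vecMulLinear.finrank_range_add_finrank_ker

theorem two_mul_finrank_range_sub_one_le (hM2 : M * M = 1) :
    2 * finrank (ZMod 2) (LinearMap.range (M - 1).vecMulLinear) ≤ v := by
  have h1 : v ≤ 2 * finrank (ZMod 2) (fixedSpace M) := by
    have := LinearMap.finrank_le_two_mul_finrank_ker (vecMulLinear_sub_one_comp_self hM2)
    rwa [finrank_fin_fun] at this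
  have h2 := finrank_range_add_finrank_fixedSpace (M := M)
  omega

theorem finrank_range_sub_one_pos (hM : M ≠ 1) :
    0 < finrank (ZMod 2) (LinearMap.range (M - 1).vecMulLinear) := by
  refine Nat.pos_of_ne_zero fun h => hM (sub_eq_zero.mp (vecMul_injective (funext fun x => ?_)))
  rw [Submodule.finrank_eq_zero, LinearMap.range_eq_bot] at h
  simpa [vecMul_sub] using LinearMap.congr_fun h x

theorem vecMul_mem_of_subApply_eq_self (hB : subApply v M B = B) {x : BinVec v} (hx : x ∈ B) :
    x ᵥ* M ∈ B :=
  hB ▸ Submodule.mem_map_of_mem hx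

theorem subApply_eq_self_of_le_fixedSpace (hT : T ≤ fixedSpace M) : subApply v M T = T := by
  refine le_antisymm ?_ fun x hx => ⟨x, hx, mem_fixedSpace.mp (hT hx)⟩
  rintro _ ⟨x, hx, rfl⟩
  simpa [mem_fixedSpace.mp (hT hx)] using hx

theorem subApply_span_vecMul (hM2 : M * M = 1) (x : BinVec v) :
    subApply v M (Submodule.span (ZMod 2) {x, x ᵥ* M}) =
      Submodule.span (ZMod 2) {x, x ᵥ* M} := by
  rw [subApply.eq_def, Submodule.map_span, Set.image_pair, Set.pair_comm]
  simp [Matrix.vecMul_vecMul, hM2]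

theorem finrank_span_vecMul (hM2 : M * M = 1) {x : BinVec v} (hx : x ∉ fixedSpace M) :
    finrank (ZMod 2) (Submodule.span (ZMod 2) {x, x ᵥ* M}) = 2 := by
  rw [mem_fixedSpace] at hx
  refine finrank_span_pair (fun h => hx (by simp [h])) (fun h => hx ?_) (Ne.symm hx)
  have hx0 : x = 0 := by simpa [vecMul_vecMul, hM2] using congrArg (· ᵥ* M) h
  rw [h, hx0]

theorem finrank_inf_fixedSpace_eq_two (hM2 : M * M = 1) (hB : finrank (ZMod 2) B = 3)
    (hBM : subApply v M B = B) (hBF : ¬ B ≤ fixedSpace M) :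
    finrank (ZMod 2) ↥(B ⊓ fixedSpace M) = 2 := by
  have hmap : B.map (M - 1).vecMulLinear ≤ B := by
    rintro _ ⟨x, hx, rfl⟩
    rw [vecMulLinear_sub_one_apply]
    exact sub_mem (vecMul_mem_of_subApply_eq_self hBM hx) hx
  have hle : finrank (ZMod 2) B ≤ 2 * finrank (ZMod 2) ↥(B ⊓ fixedSpace M) :=
    LinearMap.finrank_le_two_mul_finrank_inf_ker (vecMulLinear_sub_one_comp_self hM2) hmap
  have hlt := Submodule.finrank_lt_finrank_of_lt
    (lt_of_le_of_ne inf_le_left fun h => hBF (inf_eq_left.mp h))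
  omega

end Involution

section Conjugacy

open Module Matrix

variable {v s : ℕ} {M : Matrix (Fin v) (Fin v) (ZMod 2)}

theorem pairSwap_lt (h : 2 * s ≤ v) {i : ℕ} (hi : i < v) : pairSwap s i < v := by
  unfold pairSwap
  split_ifs <;> omega

theorem Avs_mul_row (h : 2 * s ≤ v) (P : Matrix (Fin v) (Fin v) (ZMod 2)) (j : Fin v) :
    (Avs v s * P) j = P ⟨pairSwap s j, pairSwap_lt h j.isLt⟩ := by
  funext k
  have hidx (i : Fin v) : (i : ℕ) = pairSwap s j ↔ i = ⟨pairSwap s j, pairSwap_lt h j.isLt⟩ := by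
    simp [Fin.ext_iff]
  simp [Avs, Matrix.mul_apply, hidx]

def adaptedFamily (M : Matrix (Fin v) (Fin v) (ZMod 2)) (x : Fin s → BinVec v)
    (z : Fin (v - 2 * s) → BinVec v) (j : Fin v) : BinVec v :=
  if h : (j : ℕ) < 2 * s then x ⟨j / 2, by omega⟩ ᵥ* M ^ ((j : ℕ) % 2)
  else z ⟨j - 2 * s, by omega⟩

variable {x : Fin s → BinVec v} {z : Fin (v - 2 * s) → BinVec v}

theorem adaptedFamily_vecMul (hM2 : M * M = 1) (hz : ∀ k, z k ᵥ* M = z k) (h : 2 * s ≤ v)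
    (j : Fin v) :
    adaptedFamily M x z j ᵥ* M = adaptedFamily M x z ⟨pairSwap s j, pairSwap_lt h j.isLt⟩ := by
  by_cases hj : (j : ℕ) < 2 * s
  · have hj' : pairSwap s j < 2 * s ∧ pairSwap s j / 2 = j / 2 ∧
        pairSwap s j % 2 = (j % 2 + 1) % 2 := by
      unfold pairSwap; split_ifs <;> omega
    have hpow : M ^ ((j : ℕ) % 2) * M = M ^ (((j : ℕ) % 2 + 1) % 2) := by
      rw [← pow_succ, ← pow_eq_pow_mod _ (by rw [sq, hM2])]
    simp only [adaptedFamily, dif_pos hj, dif_pos hj'.1, hj'.2.1, hj'.2.2, Matrix.vecMul_vecMul,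
      hpow]
  · have hj' : pairSwap s j = j := by unfold pairSwap; rw [if_neg hj]
    simp only [adaptedFamily, dif_neg hj, hj', hz]

theorem top_le_span_adaptedFamily (h : 2 * s ≤ v)
    (hx : Submodule.span (ZMod 2) (Set.range ((M - 1).vecMulLinear ∘ x)) =
      LinearMap.range (M - 1).vecMulLinear)
    (hz : LinearMap.range (M - 1).vecMulLinear ⊔ Submodule.span (ZMod 2) (Set.range z) =
      fixedSpace M) :
    ⊤ ≤ Submodule.span (ZMod 2) (Set.range (adaptedFamily M x z)) := by
  set S := Submodule.span (ZMod 2) (Set.range (adaptedFamily M x z))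
  have hmem (j : Fin v) : adaptedFamily M x z j ∈ S := Submodule.subset_span ⟨j, rfl⟩
  have hxS (i : Fin s) : x i ∈ S := by
    simpa [adaptedFamily, i.isLt] using hmem ⟨2 * i, by omega⟩
  have hxMS (i : Fin s) : x i ᵥ* M ∈ S := by
    have hi : (2 * (i : ℕ) + 1) / 2 = i := by omega
    simpa [adaptedFamily, hi, show 2 * (i : ℕ) + 1 < 2 * s by omega]
      using hmem ⟨2 * i + 1, by omega⟩
  have hzS (k : Fin (v - 2 * s)) : z k ∈ S := by
    simpa [adaptedFamily] using hmem ⟨2 * s + k, by omega⟩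
  have hrange : LinearMap.range (M - 1).vecMulLinear ≤ S := by
    rw [← hx, Submodule.span_le]
    rintro _ ⟨i, rfl⟩
    simpa [vecMulLinear_sub_one_apply] using sub_mem (hxMS i) (hxS i)
  have hfix : fixedSpace M ≤ S := by
    rw [← hz]
    exact sup_le hrange (Submodule.span_le.mpr (Set.range_subset_iff.mpr hzS))
  have hsup :
      ⊤ ≤ Submodule.span (ZMod 2) (Set.range x) ⊔ LinearMap.ker (M - 1).vecMulLinear := by
    rw [← LinearMap.map_le_map_iff, Submodule.map_top, Submodule.map_span, ← Set.range_comp, hx]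
  exact hsup.trans (sup_le (Submodule.span_le.mpr (Set.range_subset_iff.mpr hxS)) hfix)

theorem exists_isUnit_mul_eq_Avs_mul (hM2 : M * M = 1) :
    ∃ P : Matrix (Fin v) (Fin v) (ZMod 2), IsUnit P ∧
      P * M = Avs v (finrank (ZMod 2) (LinearMap.range (M - 1).vecMulLinear)) * P := by
  set φ := (M - 1).vecMulLinear
  obtain ⟨s, hs⟩ : ∃ s, finrank (ZMod 2) (LinearMap.range φ) = s := ⟨_, rfl⟩
  have h2s : 2 * s ≤ v := hs ▸ two_mul_finrank_range_sub_one_le hM2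
  have hrank : s + finrank (ZMod 2) (fixedSpace M) = v :=
    hs ▸ finrank_range_add_finrank_fixedSpace
  have hWF : LinearMap.range φ ≤ fixedSpace M :=
    LinearMap.range_le_ker_iff.mpr (vecMulLinear_sub_one_comp_self hM2)
  obtain ⟨w, hw⟩ := (LinearMap.range φ).exists_fin_span_eq hs
  choose x hx using fun i => (hw ▸ Submodule.subset_span ⟨i, rfl⟩ : w i ∈ LinearMap.range φ)
  obtain ⟨C, hC⟩ := (LinearMap.range φ).exists_isCompl
  have hsup : LinearMap.range φ ⊔ C ⊓ fixedSpace M = fixedSpace M := by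
    rw [← sup_inf_assoc_of_le _ hWF, hC.sup_eq_top, top_inf_eq]
  have hdim : finrank (ZMod 2) ↥(C ⊓ fixedSpace M) = v - 2 * s := by
    have := Submodule.finrank_sup_add_finrank_inf_eq (LinearMap.range φ) (C ⊓ fixedSpace M)
    rw [hsup, (hC.disjoint.mono_right inf_le_left).eq_bot, finrank_bot, add_zero, hs] at this
    rw [this] at hrank
    omega
  obtain ⟨z, hz⟩ := (C ⊓ fixedSpace M).exists_fin_span_eq hdim
  have hzfix (k : Fin (v - 2 * s)) : z k ᵥ* M = z k :=
    mem_fixedSpace.mp (inf_le_right (a := C) (hz ▸ Submodule.subset_span ⟨k, rfl⟩))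
  have hli : LinearIndependent (ZMod 2) (adaptedFamily M x z) := by
    refine linearIndependent_of_top_le_span_of_card_eq_finrank
      (top_le_span_adaptedFamily h2s ?_ (by rw [hz, hsup])) (by simp)
    rwa [show φ ∘ x = w from funext hx]
  refine ⟨Matrix.of (adaptedFamily M x z), Matrix.linearIndependent_rows_iff_isUnit.mp hli, ?_⟩
  rw [hs]
  funext j
  rw [mul_apply_eq_vecMul, Avs_mul_row h2s]
  exact adaptedFamily_vecMul hM2 hzfix h2s j

theorem conjGL_Avs (hM2 : M * M = 1) :
    ConjGL v M (Avs v (finrank (ZMod 2) (LinearMap.range (M - 1).vecMulLinear))) := by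
  obtain ⟨_, ⟨P, rfl⟩, hPM⟩ := exists_isUnit_mul_eq_Avs_mul hM2
  refine ⟨P⁻¹, ?_⟩
  rw [inv_inv, mul_assoc, ← hPM, ← mul_assoc, Units.inv_mul, one_mul]

end Conjugacy

theorem IsAutM.subApply_mem {v : ℕ} {M : Matrix (Fin v) (Fin v) (ZMod 2)}
    {D : Set (Submodule (ZMod 2) (BinVec v))} (hAut : IsAutM v M D)
    {B : Submodule (ZMod 2) (BinVec v)} (hB : B ∈ D) : subApply v M B ∈ D :=
  hAut ▸ Set.mem_image_of_mem _ hB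

namespace IsSteinerTriple

open Module Finset Matrix

variable {v : ℕ} {D : Set (Submodule (ZMod 2) (BinVec v))}
  {M : Matrix (Fin v) (Fin v) (ZMod 2)} {T B : Submodule (ZMod 2) (BinVec v)}

noncomputable def block (hD : IsSteinerTriple v D) (T : Submodule (ZMod 2) (BinVec v)) :
    Submodule (ZMod 2) (BinVec v) :=
  if h : finrank (ZMod 2) T = 2 then (hD.2 T h).exists.choose else ⊥

theorem block_mem (hD : IsSteinerTriple v D) (hT : finrank (ZMod 2) T = 2) : hD.block T ∈ D := by
  rw [block, dif_pos hT]
  exact (hD.2 T hT).exists.choose_spec.1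

theorem le_block (hD : IsSteinerTriple v D) (hT : finrank (ZMod 2) T = 2) : T ≤ hD.block T := by
  rw [block, dif_pos hT]
  exact (hD.2 T hT).exists.choose_spec.2

theorem block_eq (hD : IsSteinerTriple v D) (hT : finrank (ZMod 2) T = 2) (hB : B ∈ D)
    (hTB : T ≤ B) : hD.block T = B :=
  (hD.2 T hT).unique ⟨hD.block_mem hT, hD.le_block hT⟩ ⟨hB, hTB⟩

open scoped Classical in
theorem card_nonzeroPairs_eq_sum (hD : IsSteinerTriple v D) (F : Submodule (ZMod 2) (BinVec v)) :
    #(nonzeroPairs F) = ∑ B ∈ D.toFinite.toFinset, #(nonzeroPairs (B ⊓ F)) := by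
  have hspan {p : BinVec v × BinVec v} (hp : p.1 ≠ 0 ∧ p.2 ≠ 0 ∧ p.1 ≠ p.2) :=
    finrank_span_pair hp.1 hp.2.1 hp.2.2
  rw [card_eq_sum_card_fiberwise (f := fun p => hD.block (Submodule.span (ZMod 2) {p.1, p.2}))]
  · refine sum_congr rfl fun B hB => congrArg card (ext fun p => ?_)
    rw [Set.Finite.mem_toFinset] at hB
    simp only [mem_filter, mem_nonzeroPairs, Submodule.mem_inf]
    constructor
    · rintro ⟨⟨h1, h2, hp⟩, rfl⟩
      have hle := hD.le_block (hspan hp)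
      exact ⟨⟨hle (Submodule.subset_span (by simp)), h1⟩,
        ⟨hle (Submodule.subset_span (by simp)), h2⟩, hp⟩
    · rintro ⟨⟨hB1, h1⟩, ⟨hB2, h2⟩, hp⟩
      refine ⟨⟨h1, h2, hp⟩, hD.block_eq (hspan hp) hB ?_⟩
      rw [Submodule.span_le, Set.insert_subset_iff, Set.singleton_subset_iff]
      exact ⟨hB1, hB2⟩
  · intro p hp
    rw [mem_coe, mem_nonzeroPairs] at hp
    simpa using hD.block_mem (hspan hp.2.2)

theorem subApply_block (hD : IsSteinerTriple v D) (hAut : IsAutM v M D)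
    (hT : finrank (ZMod 2) T = 2) (hTM : subApply v M T = T) :
    subApply v M (hD.block T) = hD.block T :=
  (hD.block_eq hT (hAut.subApply_mem (hD.block_mem hT))
    (hTM.ge.trans (Submodule.map_mono (hD.le_block hT)))).symm

theorem subApply_eq_self_of_finrank_inf_fixedSpace (hD : IsSteinerTriple v D)
    (hAut : IsAutM v M D) (hB : B ∈ D) (h : finrank (ZMod 2) ↥(B ⊓ fixedSpace M) = 2) :
    subApply v M B = B :=
  hD.block_eq h hB inf_le_left ▸
    hD.subApply_block hAut h (subApply_eq_self_of_le_fixedSpace inf_le_right)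

open scoped Classical in
noncomputable def planeBlocks (D : Set (Submodule (ZMod 2) (BinVec v)))
    (F : Submodule (ZMod 2) (BinVec v)) : Finset (Submodule (ZMod 2) (BinVec v)) :=
  {B ∈ D.toFinite.toFinset | finrank (ZMod 2) ↥(B ⊓ F) = 2}

theorem natCast_card_nonzeroPairs (hD : IsSteinerTriple v D) (F : Submodule (ZMod 2) (BinVec v)) :
    (#(nonzeroPairs F) : ZMod 7) = 6 * #(planeBlocks D F) := by
  classical
  have hterm (d : ℕ) (hd : d ≤ 3) :
      (((2 ^ d - 1) * (2 ^ d - 2) : ℕ) : ZMod 7) = if d = 2 then 6 else 0 := by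
    interval_cases d <;> decide
  have hle (B) (hB : B ∈ D.toFinite.toFinset) : finrank (ZMod 2) ↥(B ⊓ F) ≤ 3 := by
    rw [Set.Finite.mem_toFinset] at hB
    exact hD.1 B hB ▸ Submodule.finrank_mono inf_le_left
  rw [hD.card_nonzeroPairs_eq_sum, Nat.cast_sum,
    sum_congr rfl fun B hB => (card_nonzeroPairs (B ⊓ F)).symm ▸ hterm _ (hle B hB),
    sum_ite, sum_const_zero, add_zero, sum_const, nsmul_eq_mul, mul_comm, planeBlocks]

open scoped Classical in
theorem two_pow_eq_add_card_planeBlocks (hD : IsSteinerTriple v D) (hAut : IsAutM v M D)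
    (hM2 : M * M = 1) :
    2 ^ v = 2 ^ finrank (ZMod 2) (fixedSpace M) + 4 * #(planeBlocks D (fixedSpace M)) := by
  set F := fixedSpace M
  set blockThrough := fun x : BinVec v => hD.block (Submodule.span (ZMod 2) {x, x ᵥ* M})
  have hx_mem {x} (hx : x ∉ F) : x ∈ blockThrough x :=
    hD.le_block (finrank_span_vecMul hM2 hx) (Submodule.subset_span (by simp))
  have hmaps : Set.MapsTo blockThrough ({x | x ∉ F} : Finset _) (planeBlocks D F) := by
    intro x hx
    rw [mem_coe, mem_filter_univ] at hx
    have hT := finrank_span_vecMul hM2 hx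
    have hmem := hD.block_mem hT
    rw [mem_coe, planeBlocks, mem_filter, Set.Finite.mem_toFinset]
    exact ⟨hmem, finrank_inf_fixedSpace_eq_two hM2 (hD.1 _ hmem)
      (hD.subApply_block hAut hT (subApply_span_vecMul hM2 x)) fun h => hx (h (hx_mem hx))⟩
  have hfiber (B) (hB : B ∈ planeBlocks D F) :
      #{x ∈ ({x | x ∉ F} : Finset _) | blockThrough x = B} = 4 := by
    simp only [planeBlocks, mem_filter, Set.Finite.mem_toFinset] at hB
    have hBM := hD.subApply_eq_self_of_finrank_inf_fixedSpace hAut hB.1 hB.2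
    calc #{x ∈ ({x | x ∉ F} : Finset _) | blockThrough x = B}
        = #{x | x ∈ B ∧ x ∉ F} := by
          rw [filter_filter]
          refine congrArg card (filter_congr fun x _ =>
            ⟨fun ⟨hx, hxB⟩ => ⟨hxB ▸ hx_mem hx, hx⟩, fun ⟨hxB, hx⟩ => ⟨hx, ?_⟩⟩)
          refine hD.block_eq (finrank_span_vecMul hM2 hx) hB.1 ?_
          rw [Submodule.span_le, Set.insert_subset_iff, Set.singleton_subset_iff]
          exact ⟨hxB, vecMul_mem_of_subApply_eq_self hBM hxB⟩
      _ = 2 ^ 3 - 2 ^ 2 := by rw [card_filter_mem_and_not_mem, hD.1 B hB.1, hB.2]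
  have hsplit := card_filter_add_card_filter_not (s := (univ : Finset (BinVec v))) (· ∈ F)
  rw [card_filter_mem_submodule, card_eq_sum_card_fiberwise hmaps, sum_congr rfl hfiber,
    sum_const, smul_eq_mul, card_univ, Fintype.card_fun, ZMod.card, Fintype.card_fin] at hsplit
  omega

theorem finrank_fixedSpace_mod_three_ne_one (hD : IsSteinerTriple v D) (hAut : IsAutM v M D)
    (hM2 : M * M = 1) (hv : v % 3 = 0) : finrank (ZMod 2) (fixedSpace M) % 3 ≠ 1 := by
  intro hf
  have hpow (n : ℕ) : (2 : ZMod 7) ^ n = 2 ^ (n % 3) := pow_eq_pow_mod n (by decide)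
  have hpairs := hD.natCast_card_nonzeroPairs (fixedSpace M)
  have hcount := congrArg (Nat.cast : ℕ → ZMod 7) (hD.two_pow_eq_add_card_planeBlocks hAut hM2)
  rw [card_nonzeroPairs, Nat.cast_mul, Nat.cast_sub Nat.one_le_two_pow,
    Nat.cast_sub (Nat.le_self_pow (by omega) 2)] at hpairs
  push_cast at hpairs hcount
  rw [hpow, hf] at hpairs
  rw [hpow v, hpow (finrank _ _), hf, hv] at hcount
  exact (by decide : ∀ n : ZMod 7, (2 ^ 1 - 1) * (2 ^ 1 - 2) = 6 * n → 2 ^ 0 = 2 ^ 1 + 4 * n →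
    False) _ hpairs hcount

end IsSteinerTriple

theorem stmt2_general (v : ℕ) (hv : v % 6 = 3)
    (D : Set (Submodule (ZMod 2) (BinVec v))) (hD : IsSteinerTriple v D)
    (A : GL (Fin v) (ZMod 2)) (hAut : IsAutM v A.val D)
    (hA2 : A ^ 2 = 1) (hA1 : A ≠ 1) :
    ∃ s : ℕ, 1 ≤ s ∧ s ≤ v / 2 ∧ s % 3 ≠ 2 ∧ ConjGL v A.val (Avs v s) := by
  have hM2 : A.val * A.val = 1 := by rw [← Units.val_mul, ← sq, hA2, Units.val_one]
  have hM1 : A.val ≠ 1 := fun h => hA1 (Units.ext h)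
  have hrank := finrank_range_add_finrank_fixedSpace (M := A.val)
  have hf := hD.finrank_fixedSpace_mod_three_ne_one hAut hM2 (by omega)
  refine ⟨_, finrank_range_sub_one_pos hM1, ?_, ?_, conjGL_Avs hM2⟩
  · have := two_mul_finrank_range_sub_one_le hM2
    omega
  · omega

/-- automorphisms of order 2 of an `S_2[2,3,v]` with `v ≡ 3 (mod 6)`. -/
theorem stmt2 (v : ℕ) (hv7 : 7 ≤ v) (hv : v % 6 = 3)
    (D : Set (Submodule (ZMod 2) (BinVec v))) (hD : IsSteinerTriple v D)
    (A : GL (Fin v) (ZMod 2)) (hAut : IsAutM v A.val D)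
    (hA2 : A ^ 2 = 1) (hA1 : A ≠ 1) :
    ∃ s : ℕ, 1 ≤ s ∧ s ≤ v / 2 ∧ s % 3 ≠ 2 ∧ ConjGL v A.val (Avs v s) :=
  stmt2_general v hv D hD A hAut hA2 hA1
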